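/- Let G be a graph with α(G) > α for some positive integer α, and let G_α be the construction with cliques V_i of size α for each vertex, complete bipartite connections for edges of G, pendant vertices u_{i,j}, and hub vertices w₁,…,w_α. Then τ(G_α) < 1; in particular, taking an independent set I of size α(G) in the blown-up vertex set V = ∪V_i, the set S = (V∖I) ∪ W satisfies |S| < |V| and ω(G_α − S) = |V|. -/

import Mathlib

open SimpleGraph

/-- Number of connected components after deleting vertex set `S`. -/
noncomputable def numComp {V : Type*} (G : SimpleGraph V) (S : Set V) : ℕ :=
  Nat.card (G.induce (Sᶜ : Set V)).ConnectedComponent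

/-- `S` is a cutset: its removal leaves more than one component. -/
def IsCutset {V : Type*} (G : SimpleGraph V) (S : Set V) : Prop :=
  1 < numComp G S

/-- `G` is `t`-tough: every cutset `S` leaves at most `|S|/t` components.
Equivalently `τ(G) ≥ t` (for `t > 0`). -/
def IsTTough {V : Type*} (t : ℚ) (G : SimpleGraph V) : Prop :=
  ∀ S : Set V, IsCutset G S → t * (numComp G S : ℚ) ≤ (Nat.card S : ℚ)

/-- `τ(G) = t`: `G` is `t`-tough and `t` is the largest such value. -/
def ToughnessEq {V : Type*} (G : SimpleGraph V) (t : ℚ) : Prop :=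
  IsTTough t G ∧ ∀ t' : ℚ, IsTTough t' G → t' ≤ t

/-- The toughness of `G` equals `t`, characterized as the minimum of
`|S|/ω(G−S)` over cutsets `S` (valid for connected noncomplete graphs). -/
def ToughnessMin {V : Type*} (G : SimpleGraph V) (t : ℚ) : Prop :=
  IsLeast {q : ℚ | ∃ S : Set V, IsCutset G S ∧
    q = (Nat.card S : ℚ) / (numComp G S : ℚ)} t

/-- `G` is minimally `t`-tough. -/
def MinTough {V : Type*} (t : ℚ) (G : SimpleGraph V) : Prop :=
  ToughnessEq G t ∧ ∀ e ∈ G.edgeSet, ¬ IsTTough t (G.deleteEdges {e})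

/-- `G` is almost minimally 1-tough: `τ(G) ≥ 1` and `τ(G−e) < 1` for all edges. -/
def AlmostMinOneTough {V : Type*} (G : SimpleGraph V) : Prop :=
  IsTTough 1 G ∧ ∀ e ∈ G.edgeSet, ¬ IsTTough 1 (G.deleteEdges {e})

/-- The independence number of `G`. -/
noncomputable def indepNum {V : Type*} [Fintype V] (G : SimpleGraph V) : ℕ :=
  sSup {n | ∃ s : Set V, s.Pairwise (fun x y => ¬ G.Adj x y) ∧ Nat.card s = n}

/-- `G` is α-critical: deleting any edge increases the independence number. -/
def AlphaCritical {V : Type*} [Fintype V] (G : SimpleGraph V) : Prop :=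
  ∀ e ∈ G.edgeSet, _root_.indepNum G < _root_.indepNum (G.deleteEdges {e})

/-- The construction `G_α`: each vertex `i` of `G` is replaced by a clique
`V_i = {i} × Fin α`; edges of `G` become complete bipartite graphs between the
corresponding cliques; each `v_{i,j}` gets a pendant neighbor `u_{i,j}`; and
each hub vertex `w_j` is adjacent to all `u_{i,j}`. -/
def Galpha {V : Type*} (G : SimpleGraph V) (α : ℕ) :
    SimpleGraph ((V × Fin α) ⊕ ((V × Fin α) ⊕ Fin α)) :=
  SimpleGraph.fromRel (fun x y =>
    match x, y with
    | Sum.inl p, Sum.inl q => p.1 = q.1 ∨ G.Adj p.1 q.1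
    | Sum.inl p, Sum.inr (Sum.inl q) => p = q
    | Sum.inr (Sum.inl p), Sum.inr (Sum.inr j) => p.2 = j
    | _, _ => False)

/-!
Take a maximum independent set `s` of `G` and put `I = s × {0}`, an independent set of `G_α`.
In `G_α − ((V ∖ I) ∪ W)` every pendant vertex `u_{i,j}` survives, each surviving clique vertex
`v_{i,j}` is joined only to its own `u_{i,j}` (as `I` is independent), and the `u`'s are pairwise
non-adjacent. So there are exactly `α|V(G)|` components, while the deleted set has
`α|V(G)| − α(G) + α < α|V(G)|` vertices.
-/

theorem SimpleGraph.Reachable.eq_of_forall_adj {V β : Type*} {G : SimpleGraph V} {f : V → β}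
    (hf : ∀ ⦃v w⦄, G.Adj v w → f v = f w) {u v : V} (h : G.Reachable u v) : f u = f v := by
  obtain ⟨p⟩ := h
  induction p with
  | nil => rfl
  | cons hadj _ ih => exact (hf hadj).trans ih

theorem exists_isIndepSet_card_eq_indepNum {V : Type*} [Fintype V] (G : SimpleGraph V) :
    ∃ s : Set V, G.IsIndepSet s ∧ Nat.card s = _root_.indepNum G := by
  refine Nat.sSup_mem (s := {n | ∃ s : Set V, G.IsIndepSet s ∧ Nat.card s = n})
    ⟨0, ∅, by simp, by simp⟩ ⟨Fintype.card V, ?_⟩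
  rintro _ ⟨s, -, rfl⟩
  exact Nat.card_eq_fintype_card (α := V) ▸ Finite.card_subtype_le s

theorem not_isTTough_one_of_card_lt_numComp {V : Type*} {G : SimpleGraph V} {S : Set V}
    (hS : 0 < Nat.card S) (hlt : Nat.card S < numComp G S) : ¬ IsTTough 1 G := fun h => by
  have := h S (by unfold IsCutset; omega)
  rw [one_mul, Nat.cast_le] at this
  omega

namespace Galpha

variable {V : Type*} {G : SimpleGraph V} {α : ℕ}

theorem adj_inl_inl {p q : V × Fin α} :
    (Galpha G α).Adj (Sum.inl p) (Sum.inl q) ↔ p ≠ q ∧ (p.1 = q.1 ∨ G.Adj p.1 q.1) := by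
  simp only [Galpha, fromRel_adj, ne_eq, Sum.inl.injEq, G.adj_comm q.1, eq_comm (a := q.1)]
  tauto

theorem adj_inl_inr_inl {p q : V × Fin α} :
    (Galpha G α).Adj (Sum.inl p) (Sum.inr (Sum.inl q)) ↔ p = q := by
  simp [Galpha]

theorem adj_inr_inl_inl {p q : V × Fin α} :
    (Galpha G α).Adj (Sum.inr (Sum.inl p)) (Sum.inl q) ↔ p = q := by
  rw [adj_comm, adj_inl_inr_inl, eq_comm]

theorem not_adj_inr_inl_inr_inl (p q : V × Fin α) :
    ¬ (Galpha G α).Adj (Sum.inr (Sum.inl p)) (Sum.inr (Sum.inl q)) := by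
  simp [Galpha]

/-- The set `(V ∖ I) ∪ W`, where `V` is the blown-up vertex set of `G`. -/
def separator (I : Set (V × Fin α)) : Set ((V × Fin α) ⊕ ((V × Fin α) ⊕ Fin α)) :=
  Sum.inl '' Iᶜ ∪ Sum.inr '' (Sum.inr '' Set.univ)

@[simp] theorem inl_mem_separator {I : Set (V × Fin α)} {p : V × Fin α} :
    Sum.inl p ∈ separator I ↔ p ∉ I := by
  simp [separator]

@[simp] theorem inr_inl_notMem_separator (I : Set (V × Fin α)) (p : V × Fin α) :
    Sum.inr (Sum.inl p) ∉ separator I := by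
  simp [separator]

@[simp] theorem inr_inr_mem_separator (I : Set (V × Fin α)) (j : Fin α) :
    Sum.inr (Sum.inr j) ∈ separator I := by
  simp [separator]

theorem card_separator [Finite V] (I : Set (V × Fin α)) :
    Nat.card (separator I) = Nat.card ↥Iᶜ + α := by
  have hdisj : Disjoint (Sum.inl '' Iᶜ : Set ((V × Fin α) ⊕ ((V × Fin α) ⊕ Fin α)))
      (Sum.inr '' (Sum.inr '' Set.univ)) := by
    simp [Set.disjoint_left]
  simp only [Nat.card_coe_set_eq, separator]
  rw [Set.ncard_union_eq hdisj, Set.ncard_image_of_injective _ Sum.inl_injective,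
    Set.ncard_image_of_injective _ Sum.inr_injective,
    Set.ncard_image_of_injective _ Sum.inr_injective, Set.ncard_univ, Nat.card_fin]

/-- Identifies each pendant vertex `u_{i,j}` with `v_{i,j}`. -/
def collapse : (V × Fin α) ⊕ ((V × Fin α) ⊕ Fin α) → (V × Fin α) ⊕ Fin α :=
  Sum.elim Sum.inl id

theorem collapse_eq_of_adj {I : Set (V × Fin α)}
    (hI : (Galpha G α).IsIndepSet (Sum.inl '' I)) {x y : (V × Fin α) ⊕ ((V × Fin α) ⊕ Fin α)}
    (hx : x ∉ separator I) (hy : y ∉ separator I) (hxy : (Galpha G α).Adj x y) :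
    collapse x = collapse y := by
  rcases x with p | p | j <;> rcases y with q | q | k <;>
    simp_all [collapse, adj_inl_inr_inl, adj_inr_inl_inl, not_adj_inr_inl_inr_inl]
  exact (hI (Set.mem_image_of_mem _ hx) (Set.mem_image_of_mem _ hy) hxy.ne hxy).elim

theorem isIndepSet_inl_image_prod_singleton {s : Set V} (hs : G.IsIndepSet s) (j : Fin α) :
    (Galpha G α).IsIndepSet (Sum.inl '' (s ×ˢ {j})) := by
  rintro _ ⟨⟨a, i⟩, ⟨ha, hi⟩, rfl⟩ _ ⟨⟨b, k⟩, ⟨hb, hk⟩, rfl⟩ - hadj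
  rw [Set.mem_singleton_iff] at hi hk
  subst hi hk
  obtain ⟨hab, h | hG⟩ := adj_inl_inl.mp hadj
  · exact hab (Prod.ext h rfl)
  · exact hs ha hb (G.ne_of_adj hG) hG

theorem numComp_separator {I : Set (V × Fin α)} (hI : (Galpha G α).IsIndepSet (Sum.inl '' I)) :
    numComp (Galpha G α) (separator I) = Nat.card (V × Fin α) := by
  let H := (Galpha G α).induce (separator I)ᶜ
  let pendant (p : V × Fin α) : ↥(separator I)ᶜ :=
    ⟨Sum.inr (Sum.inl p), inr_inl_notMem_separator I p⟩
  have hbij : Function.Bijective fun p => H.connectedComponentMk (pendant p) := by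
    refine ⟨fun p q hpq => ?_, ?_⟩
    · have := (ConnectedComponent.exact hpq).eq_of_forall_adj (f := fun x => collapse x.1)
        fun x y hxy => collapse_eq_of_adj hI x.2 y.2 hxy
      simpa [collapse, pendant] using this
    · refine ConnectedComponent.ind fun ⟨x, hx⟩ => ?_
      rcases x with p | p | j
      · exact ⟨p, ConnectedComponent.sound (Adj.reachable ((adj_inr_inl_inl (G := G)).mpr rfl))⟩
      · exact ⟨p, rfl⟩
      · exact absurd (inr_inr_mem_separator I j) hx
  exact (Nat.card_eq_of_bijective _ hbij).symm

end Galpha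

theorem stmt13 {V : Type*} [Fintype V] (G : SimpleGraph V) (α : ℕ)
    (hα : 0 < α) (hgt : α < _root_.indepNum G) :
    ¬ IsTTough 1 (Galpha G α) ∧
    ∃ I : Set (V × Fin α),
      ∃ S : Set ((V × Fin α) ⊕ ((V × Fin α) ⊕ Fin α)),
        (Sum.inl '' I : Set ((V × Fin α) ⊕ ((V × Fin α) ⊕ Fin α))).Pairwise
          (fun x y => ¬ (Galpha G α).Adj x y) ∧
        Nat.card I = _root_.indepNum G ∧
        S = (Sum.inl '' Iᶜ) ∪
          (Sum.inr '' (Sum.inr '' (Set.univ : Set (Fin α)))) ∧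
        Nat.card S < Fintype.card (V × Fin α) ∧
        numComp (Galpha G α) S = Fintype.card (V × Fin α) := by
  obtain ⟨s, hs, hs_card⟩ := exists_isIndepSet_card_eq_indepNum G
  set I := s ×ˢ {(⟨0, hα⟩ : Fin α)}
  have hI : (Galpha G α).IsIndepSet (Sum.inl '' I) :=
    Galpha.isIndepSet_inl_image_prod_singleton hs ⟨0, hα⟩
  have hI_card : Nat.card I = _root_.indepNum G := (Set.card_prod_singleton s _).trans hs_card
  have hS_card := Galpha.card_separator I
  have hcomp := Galpha.numComp_separator hI
  have hsplit : Nat.card I + Nat.card ↥Iᶜ = Nat.card (V × Fin α) := by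
    simp only [Nat.card_coe_set_eq]
    exact Set.ncard_add_ncard_compl I
  have hS_lt : Nat.card (Galpha.separator I) < Nat.card (V × Fin α) := by omega
  rw [← Nat.card_eq_fintype_card]
  exact ⟨not_isTTough_one_of_card_lt_numComp (by omega) (hcomp ▸ hS_lt),
    I, Galpha.separator I, hI, hI_card, rfl, hS_lt, hcomp⟩
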